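/- arXiv:2405.11961 — 2 statements merged into one kernel-verified Lean document; each statement's English description precedes it below -/
import Mathlib

section
/- Let Fᵢ, Fⱼ : ℝⁿ → ℝⁿ and ξᵢ, ξⱼ : ℝⁿ → Matrix(d,d,ℝ) be smooth maps, and define the smooth vector fields Zᵢ(s,g) = (Fᵢ(s), g·ξᵢ(s)) and Zⱼ(s,g) = (Fⱼ(s), g·ξⱼ(s)) on ℝⁿ × Matrix(d,d,ℝ). Then the Lie bracket of vector fields satisfies, at every point (s,g): [Zᵢ,Zⱼ](s,g) = ( (DFⱼ(s))Fᵢ(s) − (DFᵢ(s))Fⱼ(s) , g·( ξᵢ(s)ξⱼ(s) − ξⱼ(s)ξᵢ(s) + (Dξⱼ(s))Fᵢ(s) − (Dξᵢ(s))Fⱼ(s) ) ), where D denotes the (Fréchet) derivative with respect to s and (Dξ(s))F denotes the directional derivative of the matrix-valued map ξ at s in the direction F. In particular, the bracket at (s,g) is the image under left translation by g (acting on the matrix component) of the bracket at (s, identity). -/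
/-!
Statement 4: formula for the Lie bracket of two equivariant vector fields
`Zᵢ(s,g) = (Fᵢ(s), g·ξᵢ(s))` on `ℝⁿ × Matrix(d,d,ℝ)`, and left-translation
equivariance of the bracket.
-/

attribute [local instance] Matrix.normedAddCommGroup Matrix.normedSpace

/-- The Lie bracket of two vector fields on a normed space:
`[V,W](x) = DW(x)·V(x) − DV(x)·W(x)`. -/
noncomputable def lieBracketVF {E : Type*} [NormedAddCommGroup E] [NormedSpace ℝ E]
    (V W : E → E) : E → E :=
  fun x => fderiv ℝ W x (V x) - fderiv ℝ V x (W x)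

set_option maxHeartbeats 1000000

/-- Matrix multiplication as a continuous bilinear map. -/
noncomputable def mulB (d : ℕ) : Matrix (Fin d) (Fin d) ℝ →L[ℝ]
    Matrix (Fin d) (Fin d) ℝ →L[ℝ] Matrix (Fin d) (Fin d) ℝ :=
  LinearMap.toContinuousLinearMap
  { toFun := fun A => LinearMap.toContinuousLinearMap (LinearMap.mulLeft ℝ A)
    map_add' := by intro a b; ext x; simp [add_mul]
    map_smul' := by intro c a; ext x; simp [smul_mul_assoc] }

@[simp] lemma mulB_apply (d : ℕ) (A B : Matrix (Fin d) (Fin d) ℝ) : mulB d A B = A * B := rfl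

/-- Derivative of the equivariant field `p ↦ (F p.1, p.2 * ξ p.1)`. -/
lemma fderiv_Z_apply {n d : ℕ} (F : (Fin n → ℝ) → (Fin n → ℝ))
    (ξ : (Fin n → ℝ) → Matrix (Fin d) (Fin d) ℝ)
    (hF : ContDiff ℝ (⊤ : ℕ∞) F) (hξ : ContDiff ℝ (⊤ : ℕ∞) ξ)
    (s : Fin n → ℝ) (g : Matrix (Fin d) (Fin d) ℝ)
    (v : Fin n → ℝ) (w : Matrix (Fin d) (Fin d) ℝ) :
    fderiv ℝ (fun p : (Fin n → ℝ) × Matrix (Fin d) (Fin d) ℝ =>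
        ((F p.1, p.2 * ξ p.1) : (Fin n → ℝ) × Matrix (Fin d) (Fin d) ℝ)) (s, g) (v, w)
      = (fderiv ℝ F s v, w * ξ s + g * fderiv ℝ ξ s v) := by
  have hF' : HasFDerivAt (fun p : (Fin n → ℝ) × Matrix (Fin d) (Fin d) ℝ => F p.1)
      ((fderiv ℝ F s).comp (ContinuousLinearMap.fst ℝ _ _)) (s, g) :=
    ((hF.differentiable (by simp) s).hasFDerivAt).comp (s, g) (hasFDerivAt_fst)
  have hξ' : HasFDerivAt (fun p : (Fin n → ℝ) × Matrix (Fin d) (Fin d) ℝ => ξ p.1)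
      ((fderiv ℝ ξ s).comp (ContinuousLinearMap.fst ℝ _ _)) (s, g) :=
    ((hξ.differentiable (by simp) s).hasFDerivAt).comp (s, g) (hasFDerivAt_fst)
  have hmul := (mulB d).hasFDerivAt_of_bilinear
    (hasFDerivAt_snd (p := ((s, g) : (Fin n → ℝ) × Matrix (Fin d) (Fin d) ℝ))) hξ'
  have h := HasFDerivAt.prodMk hF' hmul
  have h2 : HasFDerivAt (fun p : (Fin n → ℝ) × Matrix (Fin d) (Fin d) ℝ =>
      ((F p.1, p.2 * ξ p.1) : (Fin n → ℝ) × Matrix (Fin d) (Fin d) ℝ)) _ (s, g) := h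
  rw [h2.fderiv]
  simp [ContinuousLinearMap.precompR, ContinuousLinearMap.precompL, add_comm]
  rfl

/-- The bracket of the equivariant fields `Zᵢ(s,g) = (Fᵢ(s), g ξᵢ(s))` and
`Zⱼ(s,g) = (Fⱼ(s), g ξⱼ(s))` is
`( DFⱼ(s)Fᵢ(s) − DFᵢ(s)Fⱼ(s) ,
   g (ξᵢ(s)ξⱼ(s) − ξⱼ(s)ξᵢ(s) + Dξⱼ(s)Fᵢ(s) − Dξᵢ(s)Fⱼ(s)) )`,
and in particular it is the left translate by `g` of its value at `(s, 1)`. -/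
theorem lieBracket_equivariant_fields {n d : ℕ}
    (Fi Fj : (Fin n → ℝ) → (Fin n → ℝ))
    (ξi ξj : (Fin n → ℝ) → Matrix (Fin d) (Fin d) ℝ)
    (hFi : ContDiff ℝ (⊤ : ℕ∞) Fi) (hFj : ContDiff ℝ (⊤ : ℕ∞) Fj)
    (hξi : ContDiff ℝ (⊤ : ℕ∞) ξi) (hξj : ContDiff ℝ (⊤ : ℕ∞) ξj)
    (Zi Zj : (Fin n → ℝ) × Matrix (Fin d) (Fin d) ℝ →
      (Fin n → ℝ) × Matrix (Fin d) (Fin d) ℝ)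
    (hZi : ∀ p, Zi p = (Fi p.1, p.2 * ξi p.1))
    (hZj : ∀ p, Zj p = (Fj p.1, p.2 * ξj p.1)) :
    ∀ (s : Fin n → ℝ) (g : Matrix (Fin d) (Fin d) ℝ),
      lieBracketVF Zi Zj (s, g) =
        (fderiv ℝ Fj s (Fi s) - fderiv ℝ Fi s (Fj s),
          g * (ξi s * ξj s - ξj s * ξi s +
            fderiv ℝ ξj s (Fi s) - fderiv ℝ ξi s (Fj s))) ∧
      lieBracketVF Zi Zj (s, g) =
        ((lieBracketVF Zi Zj (s, 1)).1, g * (lieBracketVF Zi Zj (s, 1)).2) := by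
  have hZi' : Zi = fun p => (Fi p.1, p.2 * ξi p.1) := funext hZi
  have hZj' : Zj = fun p => (Fj p.1, p.2 * ξj p.1) := funext hZj
  have key : ∀ (s : Fin n → ℝ) (g : Matrix (Fin d) (Fin d) ℝ),
      lieBracketVF Zi Zj (s, g) =
        (fderiv ℝ Fj s (Fi s) - fderiv ℝ Fi s (Fj s),
          g * (ξi s * ξj s - ξj s * ξi s +
            fderiv ℝ ξj s (Fi s) - fderiv ℝ ξi s (Fj s))) := by
    intro s g
    have e1 : fderiv ℝ Zj (s, g) (Zi (s, g)) =
        (fderiv ℝ Fj s (Fi s), (g * ξi s) * ξj s + g * fderiv ℝ ξj s (Fi s)) := by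
      rw [hZi (s, g), hZj']
      exact fderiv_Z_apply Fj ξj hFj hξj s g (Fi s) (g * ξi s)
    have e2 : fderiv ℝ Zi (s, g) (Zj (s, g)) =
        (fderiv ℝ Fi s (Fj s), (g * ξj s) * ξi s + g * fderiv ℝ ξi s (Fj s)) := by
      rw [hZj (s, g), hZi']
      exact fderiv_Z_apply Fi ξi hFi hξi s g (Fj s) (g * ξj s)
    unfold lieBracketVF
    erw [e1, e2]
    ext <;> simp [Prod.ext_iff, mul_assoc, mul_add, mul_sub] <;> ring
  intro s g
  refine ⟨key s g, ?_⟩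
  rw [key s g, key s 1]
  simp
end

section
/- Let C∥, C⊥, L be real numbers with C∥ > 0, L > 0 and C⊥/C∥ ∈ (1,2], and define the three vectors g³, g⁴, g⁵ ∈ ℝ³ by: g³ = ( 0, √2(C⊥³ + 19C⊥²C∥ + 8C⊥C∥² − 16C∥³) / ((C∥+C⊥)(C⊥+4C∥)²), −6C⊥(C⊥² + 11C⊥C∥ + 4C∥²) / (L(C∥+C⊥)(C⊥+4C∥)²) ); g⁴ = ( 0, (5C⊥⁵ + 117C⊥⁴C∥ − 466C⊥³C∥² − 1128C⊥²C∥³ + 32C⊥C∥⁴ + 384C∥⁵) / (√2(C∥+C⊥)²(C⊥+4C∥)³), 24C∥(C⊥⁴ + 65C⊥³C∥ + 110C⊥²C∥² + 32C⊥C∥³ − 32C∥⁴) / (L(C∥+C⊥)²(C⊥+4C∥)³) ); g⁵ = ( 2√2(C⊥−C∥)(3C⊥³ + 23C⊥²C∥ + 74C⊥C∥² + 72C∥³) / (L(C∥+C⊥)²(C⊥+4C∥)²), 0, 0 ). Then the determinant of the 3×3 matrix with columns g³, g⁴, g⁵ equals p·q, where p = 12C∥⁵(C⊥−C∥)²(3C⊥³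 + 23C⊥²C∥ + 74C⊥C∥² + 72C∥³) / (L²(C∥+C⊥)⁵(C⊥+4C∥)⁵) and q = 5κ⁵ + 145κ⁴ + 458κ³ + 752κ² + 160κ − 256 with κ = C⊥/C∥; this determinant is nonzero, so the three vectors are linearly independent. -/
/-!
Statement 12: the determinant of the three Lie-bracket vectors of the
sliding-links swimmer (Eq. (2.18) of the paper, sliding case), evaluated at
σ* = π/4, a* = −L/2, equals p·q and is nonzero, so the vectors are linearly
independent.
-/

open Real

set_option maxHeartbeats 1000000 in
theorem sliding_brackets_det (Cpar Cperp L : ℝ)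
    (hCpar : 0 < Cpar) (hL : 0 < L)
    (hratio : 1 < Cperp / Cpar ∧ Cperp / Cpar ≤ 2)
    (g3 g4 g5 : Fin 3 → ℝ)
    (hg3 : g3 = ![ 0,
      Real.sqrt 2 * (Cperp ^ 3 + 19 * Cperp ^ 2 * Cpar + 8 * Cperp * Cpar ^ 2 -
          16 * Cpar ^ 3) / ((Cpar + Cperp) * (Cperp + 4 * Cpar) ^ 2),
      -(6 * Cperp * (Cperp ^ 2 + 11 * Cperp * Cpar + 4 * Cpar ^ 2) /
        (L * (Cpar + Cperp) * (Cperp + 4 * Cpar) ^ 2))])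
    (hg4 : g4 = ![ 0,
      (5 * Cperp ^ 5 + 117 * Cperp ^ 4 * Cpar - 466 * Cperp ^ 3 * Cpar ^ 2 -
          1128 * Cperp ^ 2 * Cpar ^ 3 + 32 * Cperp * Cpar ^ 4 + 384 * Cpar ^ 5) /
        (Real.sqrt 2 * (Cpar + Cperp) ^ 2 * (Cperp + 4 * Cpar) ^ 3),
      24 * Cpar * (Cperp ^ 4 + 65 * Cperp ^ 3 * Cpar + 110 * Cperp ^ 2 * Cpar ^ 2 +
          32 * Cperp * Cpar ^ 3 - 32 * Cpar ^ 4) /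
        (L * (Cpar + Cperp) ^ 2 * (Cperp + 4 * Cpar) ^ 3)])
    (hg5 : g5 = ![ 2 * Real.sqrt 2 * (Cperp - Cpar) *
        (3 * Cperp ^ 3 + 23 * Cperp ^ 2 * Cpar + 74 * Cperp * Cpar ^ 2 +
          72 * Cpar ^ 3) / (L * (Cpar + Cperp) ^ 2 * (Cperp + 4 * Cpar) ^ 2),
      0, 0]) :
    ((Matrix.of ![g3, g4, g5]).transpose.det =
      (12 * Cpar ^ 5 * (Cperp - Cpar) ^ 2 *
          (3 * Cperp ^ 3 + 23 * Cperp ^ 2 * Cpar + 74 * Cperp * Cpar ^ 2 +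
            72 * Cpar ^ 3) /
        (L ^ 2 * (Cpar + Cperp) ^ 5 * (Cperp + 4 * Cpar) ^ 5)) *
      (5 * (Cperp / Cpar) ^ 5 + 145 * (Cperp / Cpar) ^ 4 + 458 * (Cperp / Cpar) ^ 3 +
        752 * (Cperp / Cpar) ^ 2 + 160 * (Cperp / Cpar) - 256)) ∧
    (Matrix.of ![g3, g4, g5]).transpose.det ≠ 0 ∧
    LinearIndependent ℝ ![g3, g4, g5] := by
  have hCperp : Cpar < Cperp := by
    have h := hratio.1
    rw [lt_div_iff₀ hCpar] at h; linarith
  have h1 : (0:ℝ) < Cpar + Cperp := by linarith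
  have h2 : (0:ℝ) < Cperp + 4 * Cpar := by linarith
  have h3 : (0:ℝ) < Cperp - Cpar := sub_pos.mpr hCperp
  have hC0 : (0:ℝ) < Cperp := hCpar.trans hCperp
  have hs : Real.sqrt 2 ^ 2 = 2 := Real.sq_sqrt (by norm_num)
  have hs0 : Real.sqrt 2 ≠ 0 := by positivity
  have hdet : ((Matrix.of ![g3, g4, g5]).transpose.det =
      (12 * Cpar ^ 5 * (Cperp - Cpar) ^ 2 *
          (3 * Cperp ^ 3 + 23 * Cperp ^ 2 * Cpar + 74 * Cperp * Cpar ^ 2 +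
            72 * Cpar ^ 3) /
        (L ^ 2 * (Cpar + Cperp) ^ 5 * (Cperp + 4 * Cpar) ^ 5)) *
      (5 * (Cperp / Cpar) ^ 5 + 145 * (Cperp / Cpar) ^ 4 + 458 * (Cperp / Cpar) ^ 3 +
        752 * (Cperp / Cpar) ^ 2 + 160 * (Cperp / Cpar) - 256)) := by
    rw [Matrix.det_transpose, Matrix.det_fin_three, hg3, hg4, hg5]
    simp only [Matrix.of_apply, Matrix.cons_val', Matrix.cons_val_zero, Matrix.cons_val_one,
      Matrix.head_cons, Matrix.cons_val_two, Matrix.tail_cons, Matrix.head_fin_const,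
      Matrix.empty_val', Matrix.cons_val_fin_one]
    rw [mul_assoc (Real.sqrt 2), show ∀ A D : ℝ,
        A / (Real.sqrt 2 * D) = Real.sqrt 2 * A / (2 * D) from fun A D => by
      rw [show (2:ℝ) * D = Real.sqrt 2 * (Real.sqrt 2 * D) from by linear_combination (-D) * hs,
        mul_div_mul_left _ _ hs0]]
    field_simp
    ring_nf
    simp only [Real.sq_sqrt, (by norm_num : (0:ℝ) ≤ 2), hs]
    ring
  have hk1 : 1 < Cperp / Cpar := hratio.1
  set k := Cperp / Cpar with hk
  have hk2 : 1 < k ^ 2 := by nlinarith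
  have hk3 : 1 < k ^ 3 := by nlinarith
  have hk4 : 1 < k ^ 4 := by nlinarith
  have hk5 : 1 < k ^ 5 := by nlinarith
  have hq : 0 < 5 * k ^ 5 + 145 * k ^ 4 + 458 * k ^ 3 + 752 * k ^ 2 + 160 * k - 256 := by
    linarith
  have hpnum : 0 < 12 * Cpar ^ 5 * (Cperp - Cpar) ^ 2 *
      (3 * Cperp ^ 3 + 23 * Cperp ^ 2 * Cpar + 74 * Cperp * Cpar ^ 2 + 72 * Cpar ^ 3) := by
    have c5 := pow_pos hCpar 5
    have d2 := pow_pos h3 2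
    have hK : (0:ℝ) < 3 * Cperp ^ 3 + 23 * Cperp ^ 2 * Cpar + 74 * Cperp * Cpar ^ 2 +
        72 * Cpar ^ 3 := by
      nlinarith [pow_pos hC0 3, pow_pos hCpar 3, mul_pos (mul_pos hC0 hC0) hCpar,
        mul_pos hC0 (mul_pos hCpar hCpar)]
    nlinarith [mul_pos (mul_pos (mul_pos c5 d2) hK) (by norm_num : (0:ℝ) < 12)]
  have hpden : 0 < L ^ 2 * (Cpar + Cperp) ^ 5 * (Cperp + 4 * Cpar) ^ 5 :=
    mul_pos (mul_pos (pow_pos hL 2) (pow_pos h1 5)) (pow_pos h2 5)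
  have hp := div_pos hpnum hpden
  have hpos := mul_pos hp hq
  have hne : (Matrix.of ![g3, g4, g5]).transpose.det ≠ 0 := by
    rw [hdet]; exact hpos.ne'
  refine ⟨hdet, hne, ?_⟩
  have hunit : IsUnit (Matrix.of ![g3, g4, g5]) := by
    rw [Matrix.isUnit_iff_isUnit_det, isUnit_iff_ne_zero, ← Matrix.det_transpose]
    exact hne
  exact Matrix.linearIndependent_rows_iff_isUnit.mpr hunit
end
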